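/- arXiv:0901.2157 — 3 statements merged into one kernel-verified Lean document; each statement's English description precedes it below -/
import Mathlib

section
/- Let $G$ be a simple, simply connected, compact Lie group of rank $n$ and $C_k=\bigcup_{w\in\widehat{W}_k} w(\overline{A}_0\setminus F_k)$ for $0\le k\le n$. Then $C_k$ is an open neighborhood of $v_k$ in $\mathfrak{t}$ and $C_k$ is contractible to $v_k$ via the straight-line homotopy $(t,s)\mapsto (1-s)t+s v_k$ (i.e., $C_k$ is star-shaped about $v_k$). -/
noncomputable section

open Set Pointwise

/-- Axiomatization of the root/affine-Weyl data attached to a simple, simply connected,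
compact Lie group `G` of rank `n` with maximal torus `T`: `t` is the Lie algebra of `T`
(in the coordinates `t = iH`, so that roots are real-valued and the alcove walls are the
hyperplanes `α = 2πm`, `m ∈ ℤ`), `Δ` is the set of roots, `simpleRoot` the simple roots
of a positive system, `highest` the highest root, `W0` the Weyl group, `lattice` the
kernel of `exp|_𝔱` (i.e. `2πi R∨`), `Wa` the affine Weyl group, `v` the vertices of the
closed fundamental alcove, and `refl k` the reflection across the face `F_k` opposite
the vertex `v_k`.  The listed axioms are the standard facts for this situation. -/
structure AffineWeylSetup (n : ℕ) (t : Type*) [NormedAddCommGroup t]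
    [InnerProductSpace ℝ t] [FiniteDimensional ℝ t] where
  /-- the set of roots -/
  Δ : Finset (t →ₗ[ℝ] ℝ)
  /-- the simple roots `α_1, …, α_n` -/
  simpleRoot : Fin n → (t →ₗ[ℝ] ℝ)
  /-- the highest root `α_0` -/
  highest : t →ₗ[ℝ] ℝ
  /-- the Weyl group `W = W(G, 𝔱)` -/
  W0 : Subgroup (t ≃ₗ[ℝ] t)
  /-- the lattice `ker (exp|_𝔱) = 2πi R∨` -/
  lattice : AddSubgroup t
  /-- the affine Weyl group `Ŵ` -/
  Wa : Subgroup (t ≃ᵃ[ℝ] t)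
  /-- the vertices `v_0, …, v_n` of the closed fundamental alcove -/
  v : Fin (n + 1) → t
  /-- the coroot `h_{α_0}` -/
  corootHighest : t
  /-- the coroots `h_{α_1}, …, h_{α_n}` -/
  coroot : Fin n → t
  /-- the reflections `r_0, …, r_n` across the faces of the fundamental alcove -/
  refl : Fin (n + 1) → (t ≃ᵃ[ℝ] t)
  rank_eq : Module.finrank ℝ t = n
  simple_mem : ∀ j, simpleRoot j ∈ Δ
  highest_mem : highest ∈ Δ
  neg_mem : ∀ α ∈ Δ, -α ∈ Δ
  simple_indep : LinearIndependent ℝ simpleRoot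
  /-- `α_0 = ∑ m_j α_j` with `m_j ≥ 1` -/
  highest_eq : ∃ m : Fin n → ℕ, (∀ j, 1 ≤ m j) ∧ highest = ∑ j, (m j : ℝ) • simpleRoot j
  /-- the Weyl group permutes the roots -/
  W0_roots : ∀ w ∈ W0, ∀ α ∈ Δ, α ∘ₗ (w : t →ₗ[ℝ] t) ∈ Δ
  /-- `Ŵ` consists precisely of the transformations `x ↦ w x + z`, `w ∈ W`,
  `z ∈ ker (exp|_𝔱)` -/
  Wa_mem_iff : ∀ g : t ≃ᵃ[ℝ] t, g ∈ Wa ↔ ∃ w ∈ W0, ∃ z ∈ lattice, ∀ x, g x = w x + z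
  /-- since `G` is simply connected, `ker (exp|_𝔱) = 2πi R∨` is generated by the
  (2π-rescaled) simple coroots -/
  lattice_eq : lattice = AddSubgroup.closure ((2 * Real.pi) • Set.range coroot)
  v_zero : v 0 = 0
  /-- `α_0 (v_k) = 2π` for `1 ≤ k ≤ n` -/
  v_succ_highest : ∀ k : Fin n, highest (v k.succ) = 2 * Real.pi
  /-- `α_j (v_k) = 0` for `1 ≤ j,k ≤ n` with `j ≠ k` -/
  v_succ_simple : ∀ k j : Fin n, j ≠ k → simpleRoot j (v k.succ) = 0
  coroot_highest_norm : highest corootHighest = 2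
  coroot_norm : ∀ j, simpleRoot j (coroot j) = 2
  /-- `r_0 (x) = x - (α_0(x) - 2π) h_{α_0}` -/
  refl_zero : ∀ x, refl 0 x = x - (highest x - 2 * Real.pi) • corootHighest
  /-- `r_k (x) = x - α_k(x) h_{α_k}` for `1 ≤ k ≤ n` -/
  refl_succ : ∀ (j : Fin n) (x : t), refl j.succ x = x - simpleRoot j x • coroot j
  refl_mem : ∀ k, refl k ∈ Wa
  /-- the closure of the fundamental alcove is a fundamental domain: every point is
  `Ŵ`-conjugate to a point of it … -/
  fund_exists : ∀ x : t, ∃ g ∈ Wa,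
    g x ∈ closure {y | highest y < 2 * Real.pi ∧ ∀ j, 0 < simpleRoot j y}
  /-- … and `Ŵ`-conjugate points of it are equal -/
  fund_unique : ∀ x ∈ closure {y | highest y < 2 * Real.pi ∧ ∀ j, 0 < simpleRoot j y},
    ∀ g ∈ Wa, g x ∈ closure {y | highest y < 2 * Real.pi ∧ ∀ j, 0 < simpleRoot j y} →
      g x = x

namespace AffineWeylSetup

variable {n : ℕ} {t : Type*} [NormedAddCommGroup t] [InnerProductSpace ℝ t]
  [FiniteDimensional ℝ t] (s : AffineWeylSetup n t)

/-- The set of regular points: the complement of the alcove walls. -/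
def regular : Set t := {x | ∀ α ∈ s.Δ, ∀ m : ℤ, α x ≠ 2 * Real.pi * m}

/-- The alcoves: the connected components of the set of regular points. -/
def IsAlcove (A : Set t) : Prop := ∃ x ∈ s.regular, A = connectedComponentIn s.regular x

/-- The open fundamental alcove `A_0`. -/
def A0 : Set t := {x | s.highest x < 2 * Real.pi ∧ ∀ j, 0 < s.simpleRoot j x}

/-- The closed fundamental alcove `A̅_0`. -/
def A0cl : Set t := closure s.A0

/-- The face `F_k` of the closed fundamental alcove opposite to the vertex `v_k`. -/
def face (k : Fin (n + 1)) : Set t :=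
  if h : k = 0 then {x | s.highest x = 2 * Real.pi ∧ ∀ j, 0 ≤ s.simpleRoot j x}
  else {x | s.highest x ≤ 2 * Real.pi ∧ (∀ j : Fin n, j.succ ≠ k → 0 ≤ s.simpleRoot j x) ∧
    s.simpleRoot (k.pred h) x = 0}

/-- The stabilizer `Ŵ_k = {w ∈ Ŵ | w (v_k) = v_k}` of the vertex `v_k`. -/
def stab (k : Fin (n + 1)) : Subgroup (t ≃ᵃ[ℝ] t) where
  carrier := {g | g ∈ s.Wa ∧ g (s.v k) = s.v k}
  one_mem' := ⟨s.Wa.one_mem, rfl⟩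
  mul_mem' := by
    rintro a b ⟨haW, ha⟩ ⟨hbW, hb⟩
    refine ⟨s.Wa.mul_mem haW hbW, ?_⟩
    show a (b (s.v k)) = s.v k
    rw [hb, ha]
  inv_mem' := by
    rintro a ⟨haW, ha⟩
    refine ⟨s.Wa.inv_mem haW, ?_⟩
    show a.symm (s.v k) = s.v k
    conv_lhs => rw [← ha]
    exact a.symm_apply_apply _

/-- The cell `C_k = ⋃_{w ∈ Ŵ_k} w (A̅_0 \ F_k)`. -/
def cell (k : Fin (n + 1)) : Set t :=
  ⋃ w ∈ s.stab k, (w : t ≃ᵃ[ℝ] t) '' (s.A0cl \ s.face k)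

end AffineWeylSetup

namespace AffineWeylSetup

variable {n : ℕ} {t : Type*} [NormedAddCommGroup t] [InnerProductSpace ℝ t]
  [FiniteDimensional ℝ t] (s : AffineWeylSetup n t)

/-- linear part of the `i`-th wall functional -/
def wlin (i : Fin (n + 1)) : t →ₗ[ℝ] ℝ :=
  if h : i = 0 then -s.highest else s.simpleRoot (i.pred h)

/-- the `i`-th wall functional (affine), nonnegative on the closed alcove -/
def phi (i : Fin (n + 1)) (x : t) : ℝ :=
  s.wlin i x + (if i = 0 then 2 * Real.pi else 0)

/-- the vector used by the `i`-th reflection -/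
def ecor (i : Fin (n + 1)) : t :=
  if h : i = 0 then -s.corootHighest else s.coroot (i.pred h)

lemma phi_zero (x : t) : s.phi 0 x = 2 * Real.pi - s.highest x := by
  simp [phi, wlin]; ring

lemma phi_succ (j : Fin n) (x : t) : s.phi j.succ x = s.simpleRoot j x := by
  simp [phi, wlin, Fin.succ_ne_zero]

lemma phi_sub (i : Fin (n + 1)) (x y : t) :
    s.phi i x - s.phi i y = s.wlin i (x - y) := by
  simp [phi, map_sub]

lemma phi_combo (i : Fin (n + 1)) {a b : ℝ} (hab : a + b = 1) (x y : t) :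
    s.phi i (a • x + b • y) = a * s.phi i x + b * s.phi i y := by
  set c : ℝ := if i = 0 then 2 * Real.pi else 0 with hc
  simp only [phi, map_add, map_smul, smul_eq_mul, ← hc]
  have : a * c + b * c = c := by rw [← add_mul, hab, one_mul]
  linarith

lemma wlin_ecor (i : Fin (n + 1)) : s.wlin i (s.ecor i) = 2 := by
  by_cases h : i = 0
  · subst h; simp [wlin, ecor, s.coroot_highest_norm]
  · simp [wlin, ecor, h, s.coroot_norm]

lemma refl_eq (i : Fin (n + 1)) (x : t) :
    s.refl i x = x - s.phi i x • s.ecor i := by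
  by_cases h : i = 0
  · subst h
    rw [s.refl_zero x]
    rw [phi_zero, ecor, dif_pos rfl, smul_neg, sub_neg_eq_add]
    module
  · have hi : i = (i.pred h).succ := (Fin.succ_pred i h).symm
    rw [hi, s.refl_succ (i.pred h) x]
    congr 1
    rw [← hi]
    simp [phi, wlin, h, ecor]

/-- the set that turns out to be the closed alcove -/
def K : Set t := {x | ∀ i, 0 ≤ s.phi i x}

lemma A0_eq : s.A0 = {x | ∀ i, 0 < s.phi i x} := by
  ext x
  constructor
  · rintro ⟨h0, hj⟩ i
    rcases Fin.eq_zero_or_eq_succ i with rfl | ⟨j, rfl⟩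
    · rw [phi_zero]; linarith
    · rw [phi_succ]; exact hj j
  · intro h
    refine ⟨?_, fun j => ?_⟩
    · have := h 0; rw [phi_zero] at this; linarith
    · have := h j.succ; rwa [phi_succ] at this

end AffineWeylSetup
namespace AffineWeylSetup

variable {n : ℕ} {t : Type*} [NormedAddCommGroup t] [InnerProductSpace ℝ t]
  [FiniteDimensional ℝ t] (s : AffineWeylSetup n t)

lemma simple_span : ∀ x : t, (∀ j, s.simpleRoot j x = 0) → x = 0 := by
  intro x hx
  have hsp : Submodule.span ℝ (Set.range s.simpleRoot) = ⊤ := by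
    apply Submodule.eq_top_of_finrank_eq
    rw [finrank_span_eq_card s.simple_indep, Fintype.card_fin]
    exact ((Subspace.dual_finrank_eq).trans s.rank_eq).symm
  rw [← Module.forall_dual_apply_eq_zero_iff ℝ x]
  intro f
  have hf : f ∈ Submodule.span ℝ (Set.range s.simpleRoot) := by
    rw [hsp]; trivial
  induction hf using Submodule.span_induction with
  | mem g hg => obtain ⟨j, rfl⟩ := hg; exact hx j
  | zero => rfl
  | add g h _ _ hg hh => show (g + h) x = 0; simp [LinearMap.add_apply, hg, hh]
  | smul c g _ hg => show (c • g) x = 0; simp [LinearMap.smul_apply, hg]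

lemma exists_interior : ∃ c : t, ∀ i, 0 < s.phi i c := by
  obtain ⟨m, hm1, hmeq⟩ := s.highest_eq
  set M : ℝ := ∑ j, (m j : ℝ) with hM
  have hM0 : 0 ≤ M := Finset.sum_nonneg fun j _ => by positivity
  set ε : ℝ := Real.pi / (M + 1) with hε
  have hε0 : 0 < ε := by positivity
  -- find c with α_j c = ε for all j
  set lmap : t →ₗ[ℝ] (Fin n → ℝ) := LinearMap.pi (fun j => s.simpleRoot j) with hlmap
  have hinj : Function.Injective lmap := by
    rw [← LinearMap.ker_eq_bot, Submodule.eq_bot_iff]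
    intro x hx
    exact s.simple_span x fun j => congrFun hx j
  have hrk : Module.finrank ℝ t = Module.finrank ℝ (Fin n → ℝ) := by
    simp [s.rank_eq]
  set E := lmap.linearEquivOfInjective hinj hrk with hE
  set c : t := E.symm (fun _ => ε) with hc
  have hcj : ∀ j, s.simpleRoot j c = ε := by
    intro j
    have : lmap c = fun _ => ε := by
      rw [← lmap.linearEquivOfInjective_apply hinj hrk, ← hE, hc, E.apply_symm_apply]
    exact congrFun this j
  have hθ : s.highest c = M * ε := by
    rw [hmeq]
    simp only [LinearMap.coe_sum, Finset.sum_apply, LinearMap.smul_apply, smul_eq_mul, hcj]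
    rw [hM, Finset.sum_mul]
  refine ⟨c, fun i => ?_⟩
  rcases Fin.eq_zero_or_eq_succ i with rfl | ⟨j, rfl⟩
  · rw [phi_zero, hθ]
    have h1 : M * ε < Real.pi := by
      rw [hε, ← mul_div_assoc, div_lt_iff₀ (by linarith : (0:ℝ) < M + 1)]
      nlinarith [Real.pi_pos]
    nlinarith [Real.pi_pos]
  · rw [phi_succ, hcj]; exact hε0

lemma phi_continuous (i : Fin (n + 1)) : Continuous (s.phi i) :=
  ((s.wlin i).continuous_of_finiteDimensional).add continuous_const

lemma K_closed : IsClosed (s.K) := by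
  have : s.K = ⋂ i, (s.phi i) ⁻¹' (Set.Ici 0) := by
    ext x; simp [K, Set.mem_iInter]
  rw [this]
  exact isClosed_iInter fun i => isClosed_Ici.preimage (s.phi_continuous i)

lemma A0cl_eq : s.A0cl = s.K := by
  obtain ⟨c, hc⟩ := s.exists_interior
  apply Set.Subset.antisymm
  · apply closure_minimal _ s.K_closed
    rw [show s.A0 = {x | ∀ i, 0 < s.phi i x} from s.A0_eq]
    intro x hx i
    exact (hx i).le
  · intro x hx
    have key : Filter.Tendsto (fun a : ℝ => (1 - a) • x + a • c)
        (nhdsWithin 0 (Set.Ioi 0)) (nhds x) := by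
      have hcont : Continuous (fun a : ℝ => (1 - a) • x + a • c) := by
        continuity
      have := hcont.tendsto 0
      simp only [sub_zero, one_smul, zero_smul, add_zero] at this
      exact this.mono_left nhdsWithin_le_nhds
    refine mem_closure_of_tendsto key ?_
    have h1 : ∀ᶠ a : ℝ in nhdsWithin 0 (Set.Ioi 0), a < 1 :=
      Filter.Eventually.filter_mono nhdsWithin_le_nhds
        (isOpen_Iio.eventually_mem (show (0:ℝ) ∈ Set.Iio 1 by norm_num))
    have h2 : ∀ᶠ a : ℝ in nhdsWithin 0 (Set.Ioi 0), a ∈ Set.Ioi (0:ℝ) :=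
      eventually_mem_nhdsWithin
    filter_upwards [h1, h2] with a ha1 ha0
    rw [show s.A0 = {x | ∀ i, 0 < s.phi i x} from s.A0_eq]
    intro i
    rw [s.phi_combo i (by ring : (1 - a) + a = 1)]
    have := hx i
    have := hc i
    have : 0 < a := ha0
    nlinarith

lemma face_eq (k : Fin (n + 1)) :
    s.face k = {x | (∀ i, 0 ≤ s.phi i x) ∧ s.phi k x = 0} := by
  ext x
  by_cases hk : k = 0
  · subst hk
    simp only [face, dif_pos rfl, Set.mem_setOf_eq]
    constructor
    · rintro ⟨h1, h2⟩
      refine ⟨fun i => ?_, by rw [phi_zero, h1]; ring⟩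
      rcases Fin.eq_zero_or_eq_succ i with rfl | ⟨j, rfl⟩
      · rw [phi_zero, h1]; simp
      · rw [phi_succ]; exact h2 j
    · rintro ⟨h1, h2⟩
      rw [phi_zero] at h2
      exact ⟨by linarith, fun j => by have := h1 j.succ; rwa [phi_succ] at this⟩
  · simp only [face, dif_neg hk, Set.mem_setOf_eq]
    have hks : (k.pred hk).succ = k := Fin.succ_pred k hk
    constructor
    · rintro ⟨h1, h2, h3⟩
      constructor
      · intro i
        rcases Fin.eq_zero_or_eq_succ i with rfl | ⟨j, rfl⟩
        · rw [phi_zero]; linarith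
        · rw [phi_succ]
          by_cases hj : j.succ = k
          · have : j = k.pred hk := by rw [← hks] at hj; exact Fin.succ_injective _ hj
            rw [this, h3]
          · exact h2 j hj
      · rw [← hks, phi_succ]; exact h3
    · rintro ⟨h1, h2⟩
      have h0 := h1 0
      rw [phi_zero] at h0
      rw [← hks, phi_succ] at h2
      refine ⟨by linarith, fun j hj => ?_, h2⟩
      have := h1 j.succ; rwa [phi_succ] at this
  
/-- the "alcove minus face" sets, described by inequalities -/
lemma diff_eq (k : Fin (n + 1)) :
    s.A0cl \ s.face k = {x | (∀ i, 0 ≤ s.phi i x) ∧ 0 < s.phi k x} := by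
  rw [s.A0cl_eq, s.face_eq]
  ext x
  simp only [Set.mem_diff, Set.mem_setOf_eq, K]
  constructor
  · rintro ⟨h1, h2⟩
    refine ⟨h1, ?_⟩
    rcases lt_or_eq_of_le (h1 k) with h | h
    · exact h
    · exact absurd ⟨h1, h.symm⟩ h2
  · rintro ⟨h1, h2⟩
    exact ⟨h1, fun h => by rw [h.2] at h2; exact lt_irrefl 0 h2⟩

lemma phi_v_ne {i k : Fin (n + 1)} (h : i ≠ k) : s.phi i (s.v k) = 0 := by
  rcases Fin.eq_zero_or_eq_succ i with rfl | ⟨i', rfl⟩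
  · rcases Fin.eq_zero_or_eq_succ k with rfl | ⟨j, rfl⟩
    · exact absurd rfl h
    · rw [phi_zero, s.v_succ_highest j]; ring
  · rcases Fin.eq_zero_or_eq_succ k with rfl | ⟨j, rfl⟩
    · rw [phi_succ, s.v_zero, map_zero]
    · rw [phi_succ]
      exact s.v_succ_simple j i' (fun hij => h (by rw [hij]))

lemma phi_v_self (k : Fin (n + 1)) : 0 < s.phi k (s.v k) := by
  rcases Fin.eq_zero_or_eq_succ k with rfl | ⟨j, rfl⟩
  · rw [phi_zero, s.v_zero, map_zero]
    norm_num [Real.pi_pos]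
  · rw [phi_succ]
    obtain ⟨m, hm1, hmeq⟩ := s.highest_eq
    have hθ := s.v_succ_highest j
    rw [hmeq] at hθ
    simp only [LinearMap.coe_sum, Finset.sum_apply, LinearMap.smul_apply, smul_eq_mul] at hθ
    rw [Finset.sum_eq_single j (fun i _ hij => by rw [s.v_succ_simple j i hij, mul_zero])
      (fun h => absurd (Finset.mem_univ j) h)] at hθ
    have hmj : (0:ℝ) < (m j : ℝ) := by exact_mod_cast hm1 j
    nlinarith [Real.pi_pos]

end AffineWeylSetup
namespace AffineWeylSetup

variable {n : ℕ} {t : Type*} [NormedAddCommGroup t] [InnerProductSpace ℝ t]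
  [FiniteDimensional ℝ t] (s : AffineWeylSetup n t)

omit [FiniteDimensional ℝ t] in
lemma affine_decomp (g : t ≃ᵃ[ℝ] t) (x y : t) :
    g x = g.linear (x - y) + g y := by
  have := g.map_vadd y (x - y)
  rwa [vadd_eq_add, sub_add_cancel, vadd_eq_add] at this

omit [FiniteDimensional ℝ t] in
lemma affine_sub (g : t ≃ᵃ[ℝ] t) (x y : t) :
    g x - g y = g.linear (x - y) := by
  rw [affine_decomp g x y]; abel

omit [FiniteDimensional ℝ t] in
lemma affine_ext {g g' : t ≃ᵃ[ℝ] t} (y : t) (hl : g.linear = g'.linear)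
    (hy : g y = g' y) : g = g' := by
  ext x
  rw [affine_decomp g x y, affine_decomp g' x y, hl, hy]

lemma linear_mem_W0 {g : t ≃ᵃ[ℝ] t} (hg : g ∈ s.Wa) : g.linear ∈ s.W0 := by
  obtain ⟨w, hw, z, hz, hgx⟩ := (s.Wa_mem_iff g).mp hg
  have : g.linear = w := by
    ext x
    have h1 : g x - g 0 = g.linear (x - 0) := affine_sub g x 0
    rw [hgx, hgx, sub_zero] at h1
    simpa using h1.symm
  rwa [this]

instance : Finite ↥s.W0 := by
  have : Finite (Fin n → {α : t →ₗ[ℝ] ℝ // α ∈ s.Δ}) := by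
    have : Fintype {α : t →ₗ[ℝ] ℝ // α ∈ s.Δ} := FinsetCoe.fintype s.Δ
    exact Finite.of_fintype _
  refine Finite.of_injective
    (fun w : ↥s.W0 => fun j => (⟨s.simpleRoot j ∘ₗ ((w : t ≃ₗ[ℝ] t) : t →ₗ[ℝ] t),
      s.W0_roots w w.2 _ (s.simple_mem j)⟩ : {α : t →ₗ[ℝ] ℝ // α ∈ s.Δ})) ?_
  intro w w' h
  ext x
  have hj : ∀ j, s.simpleRoot j ((w : t ≃ₗ[ℝ] t) x) = s.simpleRoot j ((w' : t ≃ₗ[ℝ] t) x) := by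
    intro j
    have h2 := congrArg Subtype.val (congrFun h j)
    simpa using LinearMap.congr_fun h2 x
  have : (w : t ≃ₗ[ℝ] t) x - (w' : t ≃ₗ[ℝ] t) x = 0 := by
    apply s.simple_span
    intro j
    rw [map_sub, hj j, sub_self]
  have hx := sub_eq_zero.mp this
  exact hx

/-- the stabilizer of an arbitrary point -/
def stabPt (y : t) : Subgroup (t ≃ᵃ[ℝ] t) where
  carrier := {g | g ∈ s.Wa ∧ g y = y}
  one_mem' := ⟨s.Wa.one_mem, rfl⟩
  mul_mem' := by
    rintro a b ⟨haW, ha⟩ ⟨hbW, hb⟩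
    refine ⟨s.Wa.mul_mem haW hbW, ?_⟩
    show a (b y) = y
    rw [hb, ha]
  inv_mem' := by
    rintro a ⟨haW, ha⟩
    refine ⟨s.Wa.inv_mem haW, ?_⟩
    show a.symm y = y
    conv_lhs => rw [← ha]
    exact a.symm_apply_apply _

end AffineWeylSetup

section Bform

open RealInnerProductSpace

variable {t : Type*} [NormedAddCommGroup t] [InnerProductSpace ℝ t]
  [FiniteDimensional ℝ t] (H : Subgroup (t ≃ᵃ[ℝ] t)) [Fintype ↥H]

/-- averaged inner product over a finite group of affine transformations -/
def Bform (u w : t) : ℝ :=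
  ∑ h : ↥H, ⟪((h : t ≃ᵃ[ℝ] t)).linear u, ((h : t ≃ᵃ[ℝ] t)).linear w⟫

omit [FiniteDimensional ℝ t] in
lemma Bform_expand (u e : t) (a : ℝ) :
    Bform H (u - a • e) (u - a • e) =
      Bform H u u - 2 * a * Bform H u e + a ^ 2 * Bform H e e := by
  have point : ∀ h : ↥H,
      ⟪((h : t ≃ᵃ[ℝ] t)).linear (u - a • e), ((h : t ≃ᵃ[ℝ] t)).linear (u - a • e)⟫ =
        ⟪((h : t ≃ᵃ[ℝ] t)).linear u, ((h : t ≃ᵃ[ℝ] t)).linear u⟫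
        - 2 * a * ⟪((h : t ≃ᵃ[ℝ] t)).linear u, ((h : t ≃ᵃ[ℝ] t)).linear e⟫
        + a ^ 2 * ⟪((h : t ≃ᵃ[ℝ] t)).linear e, ((h : t ≃ᵃ[ℝ] t)).linear e⟫ := by
    intro h
    rw [map_sub, map_smul]
    rw [inner_sub_left, inner_sub_right, inner_sub_right]
    rw [real_inner_smul_left, real_inner_smul_right, real_inner_smul_left,
      real_inner_smul_right]
    rw [real_inner_comm (((h : t ≃ᵃ[ℝ] t)).linear e) (((h : t ≃ᵃ[ℝ] t)).linear u)]
    ring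
  rw [Bform, Finset.sum_congr rfl (fun h _ => point h), Finset.sum_add_distrib,
    Finset.sum_sub_distrib, ← Finset.mul_sum, ← Finset.mul_sum]
  rfl

omit [FiniteDimensional ℝ t] in
lemma Bform_inv (h₀ : ↥H) (u w : t) :
    Bform H (((h₀ : t ≃ᵃ[ℝ] t)).linear u) (((h₀ : t ≃ᵃ[ℝ] t)).linear w) = Bform H u w := by
  have hcomp : ∀ (a b : ↥H) (x : t),
      (((a * b : ↥H) : t ≃ᵃ[ℝ] t)).linear x
        = ((a : t ≃ᵃ[ℝ] t)).linear (((b : t ≃ᵃ[ℝ] t)).linear x) := fun _ _ _ => rfl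
  have hcancel : ∀ x : t,
      (((h₀⁻¹ : ↥H) : t ≃ᵃ[ℝ] t)).linear (((h₀ : ↥H) : t ≃ᵃ[ℝ] t).linear x) = x := by
    intro x
    rw [← hcomp, inv_mul_cancel]
    rfl
  rw [Bform, Bform]
  refine (Fintype.sum_equiv (Equiv.mulRight h₀⁻¹) _ _ fun h => ?_).symm
  show ⟪((h : t ≃ᵃ[ℝ] t)).linear u, ((h : t ≃ᵃ[ℝ] t)).linear w⟫
      = ⟪(((h * h₀⁻¹ : ↥H) : t ≃ᵃ[ℝ] t)).linear (((h₀ : ↥H) : t ≃ᵃ[ℝ] t).linear u),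
          (((h * h₀⁻¹ : ↥H) : t ≃ᵃ[ℝ] t)).linear (((h₀ : ↥H) : t ≃ᵃ[ℝ] t).linear w)⟫
  rw [hcomp, hcomp, hcancel, hcancel]

omit [FiniteDimensional ℝ t] in
lemma Bform_pos {e : t} (he : e ≠ 0) : 0 < Bform H e e := by
  rw [Bform]
  refine Finset.sum_pos' (fun h _ => real_inner_self_nonneg) ⟨1, Finset.mem_univ 1, ?_⟩
  have h1 : (((1 : ↥H) : t ≃ᵃ[ℝ] t)).linear = LinearEquiv.refl ℝ t := rfl
  rw [h1]
  exact lt_of_le_of_ne real_inner_self_nonneg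
    (fun hz => he ((@inner_self_eq_zero ℝ _ _ _ _ e).mp hz.symm))

end Bform
namespace AffineWeylSetup

open RealInnerProductSpace

variable {n : ℕ} {t : Type*} [NormedAddCommGroup t] [InnerProductSpace ℝ t]
  [FiniteDimensional ℝ t] (s : AffineWeylSetup n t)

lemma mem_cell_of_diff {k : Fin (n + 1)} {x : t} (hx : x ∈ s.A0cl \ s.face k) :
    x ∈ s.cell k := by
  rw [cell, Set.mem_iUnion₂]
  exact ⟨1, (s.stab k).one_mem, x, hx, rfl⟩

lemma cell_mapsto {k : Fin (n + 1)} {w : t ≃ᵃ[ℝ] t} (hw : w ∈ s.stab k) {z : t}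
    (hz : z ∈ s.cell k) : w z ∈ s.cell k := by
  rw [cell, Set.mem_iUnion₂] at hz ⊢
  obtain ⟨w', hw', x, hx, rfl⟩ := hz
  exact ⟨w * w', (s.stab k).mul_mem hw hw', x, hx, rfl⟩

lemma diff_combo {k : Fin (n + 1)} {x : t} (hx : x ∈ s.A0cl \ s.face k) {a b : ℝ}
    (ha : 0 ≤ a) (hb : 0 ≤ b) (hab : a + b = 1) :
    a • s.v k + b • x ∈ s.A0cl \ s.face k := by
  rw [s.diff_eq] at hx ⊢
  obtain ⟨h1, h2⟩ := hx
  constructor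
  · intro i
    rw [s.phi_combo i hab]
    have hvi : 0 ≤ s.phi i (s.v k) := by
      by_cases hik : i = k
      · subst hik; exact (s.phi_v_self i).le
      · rw [s.phi_v_ne hik]
    exact add_nonneg (mul_nonneg ha hvi) (mul_nonneg hb (h1 i))
  · rw [s.phi_combo k hab]
    rcases lt_or_eq_of_le ha with ha' | ha'
    · have hp := mul_pos ha' (s.phi_v_self k)
      have hq := mul_nonneg hb h2.le
      linarith
    · have hb1 : b = 1 := by rw [← ha'] at hab; linarith
      rw [← ha', hb1]
      simpa using h2

lemma cell_nhds {k : Fin (n + 1)} {y : t} (hy : y ∈ s.A0cl \ s.face k) :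
    ∃ U : Set t, IsOpen U ∧ y ∈ U ∧ U ⊆ s.cell k := by
  classical
  rw [s.diff_eq] at hy
  obtain ⟨hyK, hyk⟩ := hy
  obtain ⟨c, hc⟩ := s.exists_interior
  set H : Subgroup (t ≃ᵃ[ℝ] t) := Subgroup.closure (s.refl '' {i | s.phi i y = 0}) with hH
  have hgen : ∀ i, s.phi i y = 0 → s.refl i ∈ H := fun i hi =>
    Subgroup.subset_closure ⟨i, hi, rfl⟩
  have hHle : H ≤ s.stabPt y ⊓ s.stab k := by
    rw [hH, Subgroup.closure_le]
    rintro g ⟨i, hi, rfl⟩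
    simp only [Set.mem_setOf_eq] at hi
    have hik : i ≠ k := fun h => by rw [h] at hi; exact (ne_of_gt hyk) hi
    refine Subgroup.mem_inf.mpr ⟨⟨s.refl_mem i, ?_⟩, ⟨s.refl_mem i, ?_⟩⟩
    · rw [s.refl_eq, hi, zero_smul, sub_zero]
    · rw [s.refl_eq, s.phi_v_ne hik, zero_smul, sub_zero]
  have hmem : ∀ h : ↥H, ((h : t ≃ᵃ[ℝ] t) ∈ s.stabPt y) ∧ (h : t ≃ᵃ[ℝ] t) ∈ s.stab k :=
    fun h => Subgroup.mem_inf.mp (hHle h.2)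
  have hfixy : ∀ h : ↥H, (h : t ≃ᵃ[ℝ] t) y = y := fun h => (hmem h).1.2
  have hWa : ∀ h : ↥H, (h : t ≃ᵃ[ℝ] t) ∈ s.Wa := fun h => (hmem h).1.1
  haveI : Finite ↥H := by
    refine Finite.of_injective
      (fun h : ↥H => (⟨((h : t ≃ᵃ[ℝ] t)).linear, s.linear_mem_W0 (hWa h)⟩ : ↥s.W0)) ?_
    intro h h' hhh
    have h1 := congrArg Subtype.val hhh
    exact Subtype.ext (AffineWeylSetup.affine_ext y h1 (by rw [hfixy h, hfixy h']))
  haveI : Fintype ↥H := Fintype.ofFinite _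
  set U : Set t := ⋂ (h : ↥H) (i : {i : Fin (n + 1) // 0 < s.phi i y}),
      ((fun z => s.phi i.1 ((h : t ≃ᵃ[ℝ] t) z)) ⁻¹' Set.Ioi 0) with hU
  have hUopen : IsOpen U := by
    refine isOpen_iInter_of_finite fun h => isOpen_iInter_of_finite fun i => ?_
    exact IsOpen.preimage ((s.phi_continuous i.1).comp
      (AffineEquiv.continuous_of_finiteDimensional _)) isOpen_Ioi
  have hyU : y ∈ U := by
    rw [hU]
    refine Set.mem_iInter.mpr fun h => Set.mem_iInter.mpr fun i => ?_
    show 0 < s.phi i.1 ((h : t ≃ᵃ[ℝ] t) y)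
    rw [hfixy h]; exact i.2
  refine ⟨U, hUopen, hyU, fun z hz => ?_⟩
  have hzU : ∀ (h : ↥H) (i : Fin (n + 1)), 0 < s.phi i y →
      0 < s.phi i ((h : t ≃ᵃ[ℝ] t) z) := by
    intro h i hi
    exact Set.mem_iInter.mp (Set.mem_iInter.mp hz h) ⟨i, hi⟩
  obtain ⟨h₀, -, hmin⟩ := Finset.exists_min_image Finset.univ
    (fun h : ↥H => Bform H ((h : t ≃ᵃ[ℝ] t) z - c) ((h : t ≃ᵃ[ℝ] t) z - c))
    ⟨1, Finset.mem_univ 1⟩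
  set x := (h₀ : t ≃ᵃ[ℝ] t) z with hx
  have hxK : ∀ i, 0 ≤ s.phi i x := by
    intro i
    by_cases hi : 0 < s.phi i y
    · exact (hzU h₀ i hi).le
    · have hiy : s.phi i y = 0 := le_antisymm (not_lt.mp hi) (hyK i)
      by_contra hneg
      push_neg at hneg
      set r : t ≃ᵃ[ℝ] t := s.refl i with hr
      have hrH : r ∈ H := hgen i hiy
      have hγ : 0 < s.phi i c := hc i
      have he0 : s.ecor i ≠ 0 := by
        intro h0
        have h2 := s.wlin_ecor i
        rw [h0, map_zero] at h2
        norm_num at h2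
      have hQe : 0 < Bform H (s.ecor i) (s.ecor i) := Bform_pos H he0
      have hrx : r x = x - s.phi i x • s.ecor i := s.refl_eq i x
      have hrc : r c = c - s.phi i c • s.ecor i := s.refl_eq i c
      have hiso : Bform H (r x - r c) (r x - r c) = Bform H (x - c) (x - c) := by
        rw [AffineWeylSetup.affine_sub r x c]
        exact Bform_inv H ⟨r, hrH⟩ (x - c) (x - c)
      have hseg : r x - r c = (x - c) - (s.phi i x - s.phi i c) • s.ecor i := by
        rw [hrx, hrc]; module
      have hcross : 2 * Bform H (x - c) (s.ecor i)
          = (s.phi i x - s.phi i c) * Bform H (s.ecor i) (s.ecor i) := by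
        have h1 := hiso
        rw [hseg, Bform_expand H (x - c) (s.ecor i) (s.phi i x - s.phi i c)] at h1
        have hne : s.phi i x - s.phi i c ≠ 0 := by intro h; linarith
        refine mul_left_cancel₀ hne ?_
        nlinarith [h1]
      have hdec : Bform H (r x - c) (r x - c) < Bform H (x - c) (x - c) := by
        have hre : r x - c = (x - c) - s.phi i x • s.ecor i := by rw [hrx]; module
        rw [hre, Bform_expand H (x - c) (s.ecor i) (s.phi i x)]
        have h4 : s.phi i x * (2 * Bform H (x - c) (s.ecor i))
            = s.phi i x * ((s.phi i x - s.phi i c) * Bform H (s.ecor i) (s.ecor i)) := by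
          rw [hcross]
        have h5 : -(2 * s.phi i x * Bform H (x - c) (s.ecor i))
              + s.phi i x ^ 2 * Bform H (s.ecor i) (s.ecor i)
            = s.phi i x * s.phi i c * Bform H (s.ecor i) (s.ecor i) := by
          linear_combination -h4
        have h6 : s.phi i x * s.phi i c * Bform H (s.ecor i) (s.ecor i) < 0 :=
          mul_neg_of_neg_of_pos (mul_neg_of_neg_of_pos hneg hγ) hQe
        linarith
      have hD := hmin (⟨r, hrH⟩ * h₀) (Finset.mem_univ _)
      rw [show (((⟨r, hrH⟩ * h₀ : ↥H) : t ≃ᵃ[ℝ] t)) z = r x from rfl] at hD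
      exact absurd (lt_of_le_of_lt hD hdec) (lt_irrefl _)
  have hxk : 0 < s.phi k x := hzU h₀ k hyk
  have hxdiff : x ∈ s.A0cl \ s.face k := by
    rw [s.diff_eq]; exact ⟨hxK, hxk⟩
  have hz' : ((h₀⁻¹ : ↥H) : t ≃ᵃ[ℝ] t) x = z := by
    show ((h₀⁻¹ * h₀ : ↥H) : t ≃ᵃ[ℝ] t) z = z
    rw [inv_mul_cancel]; rfl
  rw [cell, Set.mem_iUnion₂]
  exact ⟨_, (hmem h₀⁻¹).2, x, hxdiff, hz'⟩

lemma v_mem_diff (k : Fin (n + 1)) : s.v k ∈ s.A0cl \ s.face k := by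
  rw [s.diff_eq]
  refine ⟨fun i => ?_, s.phi_v_self k⟩
  by_cases hik : i = k
  · subst hik; exact (s.phi_v_self i).le
  · rw [s.phi_v_ne hik]

lemma cell_starConvex (k : Fin (n + 1)) : StarConvex ℝ (s.v k) (s.cell k) := by
  intro y hy a b ha hb hab
  rw [cell, Set.mem_iUnion₂] at hy
  obtain ⟨w, hw, m, hm, rfl⟩ := hy
  have h1 : w (a • s.v k + b • m) = a • s.v k + b • w m := by
    have := Convex.combo_affine_apply (f := w.toAffineMap) (x := s.v k) (y := m) hab
    rw [show (w.toAffineMap : t → t) = (w : t → t) from rfl] at this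
    rw [this, hw.2]
  rw [← h1]
  rw [cell, Set.mem_iUnion₂]
  exact ⟨w, hw, a • s.v k + b • m, s.diff_combo hm ha hb hab, rfl⟩

end AffineWeylSetup
/-!
STATEMENT 5: Let `G` be a simple, simply connected, compact Lie group of rank `n` and
`C_k = ⋃_{w ∈ Ŵ_k} w (A̅_0 \\ F_k)` for `0 ≤ k ≤ n`.  Then `C_k` is an open neighborhood of
`v_k` in `𝔱`, and `C_k` is contractible to `v_k` via the straight-line homotopy
`(x, σ) ↦ (1-σ) x + σ v_k`, i.e. `C_k` is star-shaped about `v_k`.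
-/
theorem cell_isOpen_mem_starShaped
    {n : ℕ} {t : Type*} [NormedAddCommGroup t] [InnerProductSpace ℝ t]
    [FiniteDimensional ℝ t] (s : AffineWeylSetup n t) (k : Fin (n + 1)) :
    IsOpen (s.cell k) ∧ s.v k ∈ s.cell k ∧ StarConvex ℝ (s.v k) (s.cell k) ∧
      ∀ x ∈ s.cell k, ∀ σ ∈ Set.Icc (0 : ℝ) 1, (1 - σ) • x + σ • s.v k ∈ s.cell k := by
  refine ⟨?_, ?_, ?_, ?_⟩
  · rw [isOpen_iff_forall_mem_open]
    intro x hx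
    rw [AffineWeylSetup.cell, Set.mem_iUnion₂] at hx
    obtain ⟨w, hw, y, hy, rfl⟩ := hx
    obtain ⟨U, hUo, hyU, hUc⟩ := s.cell_nhds hy
    refine ⟨w '' U, ?_, ?_, ⟨y, hyU, rfl⟩⟩
    · rintro u ⟨u', hu', rfl⟩
      exact s.cell_mapsto hw (hUc hu')
    · have himg : (w : t ≃ᵃ[ℝ] t) '' U = ((w.symm : t ≃ᵃ[ℝ] t) : t → t) ⁻¹' U :=
        congrFun (Set.image_eq_preimage_of_inverse w.symm_apply_apply w.apply_symm_apply) U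
      rw [himg]
      exact hUo.preimage (AffineEquiv.continuous_of_finiteDimensional _)
  · exact s.mem_cell_of_diff (s.v_mem_diff k)
  · exact s.cell_starConvex k
  · intro x hx σ hσ
    rw [add_comm]
    exact s.cell_starConvex k hx hσ.1 (by linarith [hσ.2]) (by ring)
end
end

section
/- Let $G$ be a simple, simply connected, compact Lie group of rank $n$ and $C_k=\bigcup_{w\in\widehat{W}_k} w(\overline{A}_0\setminus F_k)$ for $0\le k\le n$. Then the closed fundamental alcove satisfies $\overline{A}_0\subseteq\bigcup_{k=0}^{n} C_k$. -/
noncomputable section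

open Set Pointwise

/-!
STATEMENT 8: Let `G` be a simple, simply connected, compact Lie group of rank `n` and
`C_k = ⋃_{w ∈ Ŵ_k} w (A̅_0 \\ F_k)` for `0 ≤ k ≤ n`.  Then the closed fundamental alcove
satisfies `A̅_0 ⊆ ⋃_{k=0}^{n} C_k`.
-/
theorem A0cl_subset_iUnion_cells
    {n : ℕ} {t : Type*} [NormedAddCommGroup t] [InnerProductSpace ℝ t]
    [FiniteDimensional ℝ t] (s : AffineWeylSetup n t) :
    s.A0cl ⊆ ⋃ k : Fin (n + 1), s.cell k := by
  intro x hx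
  -- It suffices to find `k` with `x ∉ face k`.
  have key : ∃ k : Fin (n + 1), x ∉ s.face k := by
    by_contra h
    push_neg at h
    -- From face 0 : highest x = 2π
    have h0 := h 0
    rw [AffineWeylSetup.face, dif_pos rfl] at h0
    have hhigh : s.highest x = 2 * Real.pi := h0.1
    -- From face j.succ : simpleRoot j x = 0
    have hsimple : ∀ j : Fin n, s.simpleRoot j x = 0 := by
      intro j
      have hj := h j.succ
      rw [AffineWeylSetup.face, dif_neg (Fin.succ_ne_zero j)] at hj
      have := hj.2.2
      simpa [Fin.pred_succ] using this
    obtain ⟨m, -, hm⟩ := s.highest_eq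
    have : s.highest x = 0 := by
      rw [hm]
      simp [LinearMap.sum_apply, hsimple]
    rw [hhigh] at this
    have hpi := Real.pi_pos
    linarith
  obtain ⟨k, hk⟩ := key
  refine Set.mem_iUnion.2 ⟨k, ?_⟩
  refine Set.mem_iUnion.2 ⟨(1 : t ≃ᵃ[ℝ] t), ?_⟩
  refine Set.mem_iUnion.2 ⟨(s.stab k).one_mem, ?_⟩
  exact ⟨x, ⟨hx, hk⟩, rfl⟩
end
end

section
/- Fix $1\le k\le n/2$. For $1\le j\le k+1$ let $X_{j,k}\subseteq Gr_k(\mathbb{H}^n)$ be the set of $k$-planes spanned by the columns of a matrix whose $j$-th row is $(1,0,\ldots,0)$ and whose first column vanishes outside the $j$-th entry (i.e., the image of $Gr_{k-1}(\mathbb{H}^{n-1})$ under the displayed embedding). Then $\{Gr_k(\mathbb{H}^n)\setminus X_{j,k} \mid 1\le j\le k+1\}$ is an open cover of $Gr_k(\mathbb{H}^n)$; equivalently, $X_{1,k}\cap\cdots\cap X_{k+1,k}=\emptyset$ and each $X_{j,k}$ is closed. -/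
open scoped Quaternion

noncomputable section

/-- The compact symplectic group `Sp(n) = {g ∈ SL(n, ℍ) | g gᴴ = 1}`, realized as the
unitary group of the quaternionic matrix algebra (the reduced norm one condition is
automatic for quaternionic unitary matrices). -/
abbrev Sp (n : ℕ) : Type := ↥(unitary (Matrix (Fin n) (Fin n) ℍ[ℝ]))

/-- The matrix `exp v_k = diag(-I_k, I_{n-k})`. -/
def spDiag (n k : ℕ) : Matrix (Fin n) (Fin n) ℍ[ℝ] :=
  Matrix.diagonal fun i => if (i : ℕ) < k then (-1 : ℍ[ℝ]) else 1

/-- The conjugacy class `𝒪_k` of `exp v_k = diag(-I_k, I_{n-k})` in `Sp(n)` (note that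
`g⁻¹ = star g` at the matrix level for `g ∈ Sp(n)`). -/
def spOrbit (n k : ℕ) : Set (Sp n) :=
  {a | ∃ g : Sp n, a.val = g.val * spDiag n k * star g.val}

/-- Representatives for the quaternionic Grassmannian: `n × k` quaternionic matrices of
rank `k` (viewed as right-linear injections `ℍ^k → ℍ^n`). -/
def grassRep (n k : ℕ) : Set (Matrix (Fin n) (Fin k) ℍ[ℝ]) :=
  {x | Function.Injective x.mulVec}

/-- The equivalence `x ∼ x h`, `h ∈ GL(k, ℍ)`, on rank-`k` matrices. -/
def grassRel (n k : ℕ) (x y : grassRep n k) : Prop :=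
  ∃ h : (Matrix (Fin k) (Fin k) ℍ[ℝ])ˣ, y.val = x.val * h.val

/-- The Grassmannian `Gr_k(ℍ^n)` of `k`-dimensional quaternionic subspaces of `ℍ^n`,
realized as rank-`k` matrices in `M_{n×k}(ℍ)` modulo `GL(k, ℍ)`. -/
abbrev QGrass (n k : ℕ) : Type := Quot (grassRel n k)

/-- The subgroup `Sp(k) × Sp(n-k)` of `Sp(n)`, block-diagonally embedded. -/
def spBlock (n k : ℕ) : Subgroup (Sp n) where
  carrier := {g | ∀ i j : Fin n, ¬(((i : ℕ) < k) ↔ ((j : ℕ) < k)) → g.val i j = 0}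
  one_mem' := by
    intro i j hij
    have hne : i ≠ j := by rintro rfl; exact hij Iff.rfl
    show (1 : Matrix (Fin n) (Fin n) ℍ[ℝ]) i j = 0
    exact Matrix.one_apply_ne hne
  mul_mem' := by
    intro a b ha hb i j hij
    show (a.val * b.val) i j = 0
    rw [Matrix.mul_apply]
    apply Finset.sum_eq_zero
    intro l _
    by_cases hl : ((i : ℕ) < k) ↔ ((l : ℕ) < k)
    · rw [hb l j (by tauto), mul_zero]
    · rw [ha i l hl, zero_mul]
  inv_mem' := by
    intro a ha i j hij
    have : (a⁻¹).val = star a.val := by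
      rw [← Unitary.star_eq_inv]; rfl
    rw [this, Matrix.star_apply, ha j i (by tauto), star_zero]

/-- The embedding `Fin (k+1) → Fin n` of the index set `{1, …, k+1}` of the cover. -/
def coverIdx {n k : ℕ} (hk : 1 ≤ k) (h2k : 2 * k ≤ n) (j : Fin (k + 1)) : Fin n :=
  Fin.castLE (by omega) j

/-- The subset `X_{j,k} ⊆ Gr_k(ℍ^n)`: classes of rank-`k` matrices with a `1` in position
`(j, 1)`, zeros in the rest of row `j` and of column `1`, and an arbitrary element of
`Gr_{k-1}(ℍ^{n-1})` in the remaining entries. -/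
def Xset (n k : ℕ) (hk : 1 ≤ k) (j : Fin n) : Set (QGrass n k) :=
  {P | ∃ x : grassRep n k, Quot.mk (grassRel n k) x = P ∧
    x.val j ⟨0, hk⟩ = 1 ∧
    (∀ i : Fin n, i ≠ j → x.val i ⟨0, hk⟩ = 0) ∧
    (∀ c : Fin k, c ≠ ⟨0, hk⟩ → x.val j c = 0)}

/-- The subset `Y_{j,k} ⊆ Gr_k(ℍ^n)` of `k`-planes whose `j`-th coordinate vanishes:
classes of rank-`k` matrices whose `j`-th row is zero. -/
def Yset (n k : ℕ) (j : Fin n) : Set (QGrass n k) :=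
  {P | ∃ x : grassRep n k, Quot.mk (grassRel n k) x = P ∧ ∀ c : Fin k, x.val j c = 0}

/-- `τ_k` sends `g (exp v_k) g⁻¹` to the span of the first `k` columns of `g`. -/
def IsTau (n k : ℕ) (hkn : k ≤ n) (τ : spOrbit n k → QGrass n k) : Prop :=
  ∀ (a : spOrbit n k) (g : Sp n),
    (a : Sp n).val = g.val * spDiag n k * star g.val →
      ∀ x : grassRep n k, (∀ (i : Fin n) (c : Fin k), x.val i c = g.val i (Fin.castLE hkn c)) →
        τ a = Quot.mk (grassRel n k) x

/-!
A point `P` of `Gr_k(ℍ^n)` lies in `X_{j,k}` exactly when the coordinate vector `e_j` lies in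
the subspace `P`: if `x v = e_j` for a representative `x`, column operations (right
multiplication by `GL(k, ℍ)`) first make `e_j` the first column and then clear the rest of
row `j`. For an injective `x`, `e_j ∉ im x` says that the augmented matrix `[x | e_j]` is still
injective, an open condition, so `X_{j,k}` is closed. Finally `k + 1` coordinate vectors
cannot lie in a `k`-dimensional subspace, so the `X_{j,k}` have empty intersection.
-/

open Matrix Function

theorem Module.Basis.injective_iff_linearIndependent {ι R M M' : Type*} [CommRing R]
    [AddCommGroup M] [Module R M] [AddCommGroup M'] [Module R M'] (b : Basis ι R M)
    (f : M →ₗ[R] M') : Function.Injective f ↔ LinearIndependent R (f ∘ b) :=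
  ⟨fun h => b.linearIndependent.map' f (LinearMap.ker_eq_bot.mpr h), fun h => by
    rw [← b.constr_self R f]
    exact b.injective_constr_of_linearIndependent h⟩

theorem Continuous.matrix_fromCols {X R m n₁ n₂ : Type*} [TopologicalSpace X]
    [TopologicalSpace R] {A : X → Matrix m n₁ R} {B : X → Matrix m n₂ R} (hA : Continuous A)
    (hB : Continuous B) : Continuous fun x => fromCols (A x) (B x) :=
  continuous_matrix fun i s => by
    cases s
    exacts [hA.matrix_elem i _, hB.matrix_elem i _]

theorem Matrix.isOpen_setOf_injective_mulVec {𝕜 D m n : Type*} [NontriviallyNormedField 𝕜]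
    [CompleteSpace 𝕜] [NormedRing D] [NormedAlgebra 𝕜 D] [FiniteDimensional 𝕜 D] [Fintype m]
    [Fintype n] : IsOpen {A : Matrix m n D | Injective A.mulVec} := by
  let b := Module.Free.chooseBasis 𝕜 (n → D)
  have : {A : Matrix m n D | Injective A.mulVec} =
      (fun A : Matrix m n D => fun i => A *ᵥ b i) ⁻¹' {f | LinearIndependent 𝕜 f} :=
    Set.ext fun A => b.injective_iff_linearIndependent (mulVecBilin 𝕜 𝕜 A)
  rw [this]
  exact (isOpen_setOfPred_linearIndependent (𝕜 := 𝕜) (E := m → D)).preimage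
    (continuous_pi fun i => continuous_id.matrix_mulVec continuous_const)

section DivisionRing

variable {D : Type*} [DivisionRing D] {m n p : Type*} [Fintype n]

theorem Matrix.injective_mulVec_iff {M : Matrix m n D} :
    Injective M.mulVec ↔ ∀ v, M *ᵥ v = 0 → v = 0 :=
  injective_iff_map_eq_zero (mulVecBilin D Dᵐᵒᵖ M)

theorem Matrix.isUnit_of_injective_mulVec [DecidableEq n] {U : Matrix n n D}
    (h : Injective U.mulVec) : IsUnit U :=
  IsArtinianRing.isUnit_iff_isLeftRegular.mpr (isLeftRegular_iff_mulVec_injective.mpr h)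

theorem Matrix.range_mulVec_mul_of_isUnit [DecidableEq n] (M : Matrix m n D)
    {U : Matrix n n D} (hU : IsUnit U) : Set.range (M * U).mulVec = Set.range M.mulVec := by
  have hsurj : Surjective U.mulVec := fun w =>
    ⟨((hU.unit⁻¹ : (Matrix n n D)ˣ) : Matrix n n D) *ᵥ w, by
      rw [mulVec_mulVec, hU.mul_val_inv, one_mulVec]⟩
  have : (M * U).mulVec = M.mulVec ∘ U.mulVec := funext fun w => (mulVec_mulVec w M U).symm
  rw [this, hsurj.range_comp]

theorem Matrix.injective_mulVec_fromCols_replicateCol_iff {M : Matrix m n D}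
    (hM : Injective M.mulVec) (w : m → D) :
    Injective (fromCols M (replicateCol Unit w)).mulVec ↔ w ∉ Set.range M.mulVec := by
  have key : ∀ v, fromCols M (replicateCol Unit w) *ᵥ v =
      M *ᵥ (v ∘ Sum.inl) + MulOpposite.op (v (Sum.inr ())) • w := fun v => by
    rw [fromCols_mulVec]
    congr 1
    funext i
    simp [mulVec, dotProduct]
  constructor
  · rintro h ⟨v, hv⟩
    have h0 : Sum.elim (-v) 1 = (0 : n ⊕ Unit → D) := h (by simp [key, mulVec_neg, hv])
    exact one_ne_zero (congrFun h0 (Sum.inr ()))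
  · intro hw
    refine injective_mulVec_iff.mpr fun v hv => ?_
    rw [key] at hv
    have hq : v (Sum.inr ()) = 0 := by
      by_contra hq
      refine hw ⟨MulOpposite.op (v (Sum.inr ()))⁻¹ • -(v ∘ Sum.inl), ?_⟩
      rw [mulVec_smul, mulVec_neg, eq_neg_of_add_eq_zero_left hv, neg_neg]
      funext i
      simp [hq]
    have hl : v ∘ Sum.inl = 0 := injective_mulVec_iff.mp hM _ (by simpa [hq] using hv)
    funext s
    cases s with
    | inl i => exact congrFun hl i
    | inr u => exact hq

theorem Matrix.injective_mulVec_one_add_vecMulVec_single [DecidableEq n] {u : n → D} {c : n}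
    (hu : 1 + u c ≠ 0) : Injective (1 + vecMulVec u (Pi.single c 1)).mulVec := by
  refine injective_mulVec_iff.mpr fun w hw => ?_
  rw [add_mulVec, one_mulVec, vecMulVec_mulVec, single_dotProduct, one_mul] at hw
  have hc : w c = 0 := by
    have h := congrFun hw c
    simp only [Pi.add_apply, Pi.smul_apply, MulOpposite.smul_eq_mul_unop,
      MulOpposite.unop_op, Pi.zero_apply] at h
    exact (mul_eq_zero.mp (by rw [add_mul, one_mul]; exact h)).resolve_left hu
  simpa [hc] using hw

theorem Matrix.exists_isUnit_mulVec_single_eq [DecidableEq n] {v : n → D} (hv : v ≠ 0)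
    (c : n) : ∃ U : Matrix n n D, IsUnit U ∧ U *ᵥ Pi.single c 1 = v := by
  obtain ⟨c₀, hc₀⟩ := Function.ne_iff.mp hv
  -- `M` sends `e_{c₀}` to `v` and is invertible as `v c₀ ≠ 0`; the swap moves `c₀` to `c`.
  let σ := Equiv.swap c c₀
  let M : Matrix n n D := 1 + vecMulVec (v - Pi.single c₀ 1) (Pi.single c₀ 1)
  have hM : Injective M.mulVec :=
    injective_mulVec_one_add_vecMulVec_single (by simpa using hc₀)
  have hMσ : ∀ w, M.submatrix id σ *ᵥ w = M *ᵥ (w ∘ σ.symm) := fun w =>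
    submatrix_mulVec_equiv M w id σ
  refine ⟨M.submatrix id σ, isUnit_of_injective_mulVec fun w w' h => ?_, ?_⟩
  · rw [hMσ, hMσ] at h
    exact σ.symm.surjective.injective_comp_right (hM h)
  · rw [hMσ, Pi.single_comp_equiv, Equiv.symm_symm, Equiv.swap_apply_left, add_mulVec,
      one_mulVec, vecMulVec_mulVec, single_dotProduct, one_mul, Pi.single_eq_same]
    simp

theorem Matrix.exists_isUnit_mul_row_eq_single [DecidableEq m] [DecidableEq n]
    {y : Matrix m n D} {c : n} {j : m} (hy : y *ᵥ Pi.single c 1 = Pi.single j 1) :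
    ∃ W : Matrix n n D, IsUnit W ∧
      (y * W) *ᵥ Pi.single c 1 = Pi.single j 1 ∧ (y * W) j = Pi.single c 1 := by
  let r := Function.update (y j) c 0
  let N := vecMulVec (Pi.single c 1) r
  have hrc : r ⬝ᵥ Pi.single c 1 = 0 := by simp [r, dotProduct_single]
  have hN : N * N = 0 := by
    simp only [N, mul_vecMulVec, vecMulVec_mulVec, hrc]
    simp
  have hyW : y * (1 - N) = y - vecMulVec (Pi.single j 1) r := by
    rw [Matrix.mul_sub, Matrix.mul_one, mul_vecMulVec, hy]
  have hyc : y j c = 1 := by simpa [mulVec_single] using congrFun hy j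
  refine ⟨1 - N, IsNilpotent.isUnit_one_sub ⟨2, by rw [pow_two, hN]⟩, ?_, ?_⟩
  · rw [hyW, sub_mulVec, hy, vecMulVec_mulVec, hrc]
    simp
  · rw [hyW]
    funext l
    by_cases hl : l = c
    · simp [r, hl, vecMulVec_apply, hyc]
    · simp [r, hl, vecMulVec_apply]

def Pi.opLinearEquiv : (n → D) ≃ₗ[Dᵐᵒᵖ] (n → Dᵐᵒᵖ) :=
  .piCongrRight fun _ => MulOpposite.opLinearEquiv Dᵐᵒᵖ

instance : Module.Finite Dᵐᵒᵖ (n → D) := .equiv Pi.opLinearEquiv.symm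

theorem Module.finrank_mulOpposite_fun : Module.finrank Dᵐᵒᵖ (n → D) = Fintype.card n :=
  Pi.opLinearEquiv.finrank_eq.trans (Module.finrank_fintype_fun_eq_card _)

theorem Matrix.card_le_of_injective_mulVec [Fintype p] {V : Matrix n p D}
    (h : Injective V.mulVec) : Fintype.card p ≤ Fintype.card n := by
  have := LinearMap.finrank_le_finrank_of_injective (f := mulVecBilin D Dᵐᵒᵖ V) h
  rwa [Module.finrank_mulOpposite_fun, Module.finrank_mulOpposite_fun] at this

theorem Matrix.card_le_of_forall_single_mem_range [Fintype p] [DecidableEq m] [DecidableEq p]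
    {x : Matrix m n D} {ι : p → m} (hι : Injective ι)
    (h : ∀ j, Pi.single (ι j) 1 ∈ Set.range x.mulVec) : Fintype.card p ≤ Fintype.card n := by
  choose v hv using h
  let V : Matrix n p D := of fun c j => v j c
  have hxV : (x * V).submatrix ι id = 1 := by
    ext j j'
    change (x *ᵥ v j') (ι j) = _
    simp [hv, Pi.single_apply, hι.eq_iff, one_apply]
  have hV : ∀ w, (x *ᵥ (V *ᵥ w)) ∘ ι = w := fun w => by
    conv_rhs => rw [← one_mulVec w, ← hxV]
    rw [mulVec_mulVec]
    rfl
  exact card_le_of_injective_mulVec fun w w' hw => by rw [← hV w, ← hV w', hw]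

end DivisionRing

section Grassmannian

variable {n k : ℕ}

theorem mul_mem_grassRep {x : Matrix (Fin n) (Fin k) ℍ[ℝ]} (hx : x ∈ grassRep n k)
    {U : Matrix (Fin k) (Fin k) ℍ[ℝ]} (hU : IsUnit U) : x * U ∈ grassRep n k := by
  have : (x * U).mulVec = x.mulVec ∘ U.mulVec := funext fun w => (mulVec_mulVec w x U).symm
  change Injective (x * U).mulVec
  rw [this]
  exact hx.comp (mulVec_injective_of_isUnit hU)

theorem QGrass.mk_mul_of_isUnit (x : grassRep n k) {U : Matrix (Fin k) (Fin k) ℍ[ℝ]}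
    (hU : IsUnit U) :
    Quot.mk (grassRel n k) ⟨x.1 * U, mul_mem_grassRep x.2 hU⟩ = Quot.mk (grassRel n k) x :=
  (Quot.sound ⟨hU.unit, rfl⟩).symm

def QGrass.colSpace : QGrass n k → Set (Fin n → ℍ[ℝ]) :=
  Quot.lift (fun x => Set.range x.1.mulVec) fun x _ ⟨U, hU⟩ => by
    rw [hU, range_mulVec_mul_of_isUnit _ U.isUnit]

theorem mem_Xset_iff (hk : 1 ≤ k) (j : Fin n) (P : QGrass n k) :
    P ∈ Xset n k hk j ↔ Pi.single j 1 ∈ P.colSpace := by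
  constructor
  · rintro ⟨x, rfl, hjj, hcol, -⟩
    refine ⟨Pi.single ⟨0, hk⟩ 1, funext fun i => ?_⟩
    by_cases hi : i = j
    · subst hi
      simp [mulVec_single, hjj]
    · simp [mulVec_single, hcol i hi, hi]
  · induction P using Quot.ind with | mk x => ?_
    rintro ⟨v, hv⟩
    have hv0 : v ≠ 0 := by
      rintro rfl
      simpa using congrFun hv j
    obtain ⟨U, hU, hUv⟩ := exists_isUnit_mulVec_single_eq hv0 ⟨0, hk⟩
    obtain ⟨W, hW, hcol, hrow⟩ :=
      exists_isUnit_mul_row_eq_single (y := x.1 * U) (by rw [← mulVec_mulVec, hUv, hv])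
    rw [Matrix.mul_assoc] at hcol hrow
    refine ⟨_, QGrass.mk_mul_of_isUnit x (hU.mul hW), ?_, fun i hi => ?_, fun c hc => ?_⟩
    · simpa [mulVec_single] using congrFun hcol j
    · simpa [mulVec_single, hi] using congrFun hcol i
    · simpa [hc] using congrFun hrow c

theorem isClosed_Xset (hk : 1 ≤ k) (j : Fin n) : IsClosed (Xset n k hk j) := by
  rw [← isOpen_compl_iff, ← isQuotientMap_quot_mk.isOpen_preimage]
  have : Quot.mk (grassRel n k) ⁻¹' (Xset n k hk j)ᶜ =
      (fun x : grassRep n k => fromCols x.1 (replicateCol Unit (Pi.single j 1))) ⁻¹'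
        {A | Injective A.mulVec} :=
    Set.ext fun x => (mem_Xset_iff hk j _).not.trans
      (injective_mulVec_fromCols_replicateCol_iff x.2 _).symm
  rw [this]
  exact (isOpen_setOf_injective_mulVec (𝕜 := ℝ)).preimage
    (continuous_subtype_val.matrix_fromCols continuous_const)

end Grassmannian

theorem Xset_complements_open_cover (n k : ℕ) (hk : 1 ≤ k) (h2k : 2 * k ≤ n) :
    (∀ j : Fin (k + 1), IsOpen (Xset n k hk (coverIdx hk h2k j))ᶜ) ∧
    (⋃ j : Fin (k + 1), (Xset n k hk (coverIdx hk h2k j))ᶜ) = Set.univ ∧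
    (∀ j : Fin (k + 1), IsClosed (Xset n k hk (coverIdx hk h2k j))) ∧
    (⋂ j : Fin (k + 1), Xset n k hk (coverIdx hk h2k j)) = ∅ := by
  have hclosed : ∀ j, IsClosed (Xset n k hk (coverIdx hk h2k j)) := fun j => isClosed_Xset hk _
  have hempty : ⋂ j, Xset n k hk (coverIdx hk h2k j) = ∅ := by
    refine Set.eq_empty_of_forall_notMem fun P hP => ?_
    induction P using Quot.ind with | mk x => ?_
    have := card_le_of_forall_single_mem_range (x := x.1) (Fin.castLE_injective _)
      fun j => (mem_Xset_iff hk _ _).mp (Set.mem_iInter.mp hP j)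
    simp at this
  exact ⟨fun j => (hclosed j).isOpen_compl, by rw [← Set.compl_iInter, hempty, Set.compl_empty],
    hclosed, hempty⟩
end
end
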